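/- arXiv:2212.04240 — 7 statements merged into one kernel-verified Lean document; each statement's English description precedes it below -/
import Mathlib

section
/- Let ψ : [0,∞) → [0,∞) be non-increasing and suppose there exist constants c > 0, A < D, and C < B < 1 with (D−A)/(1−B) = D/(1−C), such that ψ(h) ≤ c·(k^A·ψ(k)^B + ψ(k)^C)/(h−k)^D for all h > k ≥ 0. Then there exist k̄ ≥ 0 and c̄ > 0 such that ψ(k) ≤ c̄·k^{−(D−A)/(1−B)} = c̄·k^{−D/(1−C)} for all k ≥ k̄. -/
private lemma rpow_between_bo {x T U e : ℝ} (hT : 0 < T) (h1 : T ≤ x) (h2 : x ≤ U) :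
    x ^ e ≤ max (T ^ e) (U ^ e) := by
  rcases le_total 0 e with he | he
  · exact le_max_of_le_right (Real.rpow_le_rpow (hT.le.trans h1) h2 he)
  · exact le_max_of_le_left (Real.rpow_le_rpow_of_nonpos hT h1 he)

set_option maxHeartbeats 1000000 in
/-- Boccardo–Orsina lemma. -/
theorem boccardo_orsina_lemma
    (ψ : ℝ → ℝ) (c A B C D : ℝ)
    (hψ_nonneg : ∀ k, 0 ≤ k → 0 ≤ ψ k)
    (hψ_mono : ∀ k h, 0 ≤ k → k ≤ h → ψ h ≤ ψ k)
    (hc : 0 < c) (hAD : A < D) (hCB : C < B) (hB1 : B < 1)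
    (hexp : (D - A) / (1 - B) = D / (1 - C))
    (hineq : ∀ h k, 0 ≤ k → k < h →
      ψ h ≤ c * (k ^ A * ψ k ^ B + ψ k ^ C) / (h - k) ^ D) :
    ∃ kbar ≥ (0 : ℝ), ∃ cbar > (0 : ℝ), ∀ k, kbar ≤ k →
      ψ k ≤ cbar * k ^ (-(D - A) / (1 - B)) ∧
      cbar * k ^ (-(D - A) / (1 - B)) = cbar * k ^ (-D / (1 - C)) := by
  have h1B : (0:ℝ) < 1 - B := by linarith
  have h1C : (0:ℝ) < 1 - C := by linarith
  set γ := (D - A) / (1 - B) with hγdef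
  have hγpos : 0 < γ := div_pos (by linarith) h1B
  have hγ1 : γ * (1 - B) = D - A := by rw [hγdef]; field_simp
  have hγ2 : γ * (1 - C) = D := by rw [hexp]; field_simp
  set B' := max (max B C) 0 with hB'def
  have hB'1 : B' < 1 := by
    simp only [hB'def, max_lt_iff]
    exact ⟨⟨hB1, by linarith⟩, one_pos⟩
  have hBB' : B ≤ B' := le_max_of_le_left (le_max_left _ _)
  have hCB' : C ≤ B' := le_max_of_le_left (le_max_right _ _)
  have hB'0 : (0:ℝ) ≤ B' := le_max_right _ _
  set K := c * (2:ℝ) ^ γ * ((2:ℝ) ^ (γ * |B|) + (2:ℝ) ^ (γ * |C|)) with hKdef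
  have hKpos : 0 < K := by positivity
  set M := max (max (ψ 1) 1) (K ^ (1 / (1 - B'))) with hMdef
  have hM1 : (1:ℝ) ≤ M := le_max_of_le_left (le_max_right _ _)
  have hM0 : (0:ℝ) < M := lt_of_lt_of_le one_pos hM1
  have hMψ : ψ 1 ≤ M := le_max_of_le_left (le_max_left _ _)
  have hMK : K ≤ M ^ (1 - B') := by
    have h1 : K ^ (1 / (1 - B')) ≤ M := le_max_right _ _
    have h2 : (K ^ (1 / (1 - B'))) ^ (1 - B') ≤ M ^ (1 - B') :=
      Real.rpow_le_rpow (Real.rpow_nonneg hKpos.le _) h1 (by linarith)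
    rwa [← Real.rpow_mul hKpos.le, one_div_mul_cancel (by linarith : (1:ℝ) - B' ≠ 0),
      Real.rpow_one] at h2
  have hMcond : c * ((2:ℝ) ^ (γ * |B|) * M ^ B + (2:ℝ) ^ (γ * |C|) * M ^ C) * (2:ℝ) ^ γ ≤ M := by
    have hMB : M ^ B ≤ M ^ B' := Real.rpow_le_rpow_of_exponent_le hM1 hBB'
    have hMC : M ^ C ≤ M ^ B' := Real.rpow_le_rpow_of_exponent_le hM1 hCB'
    have hKM : K * M ^ B' ≤ M := by
      calc K * M ^ B' ≤ M ^ (1 - B') * M ^ B' :=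
            mul_le_mul_of_nonneg_right hMK (Real.rpow_nonneg hM0.le _)
        _ = M := by rw [← Real.rpow_add hM0, sub_add_cancel, Real.rpow_one]
    calc c * ((2:ℝ) ^ (γ * |B|) * M ^ B + (2:ℝ) ^ (γ * |C|) * M ^ C) * (2:ℝ) ^ γ
        ≤ c * ((2:ℝ) ^ (γ * |B|) * M ^ B' + (2:ℝ) ^ (γ * |C|) * M ^ B') * (2:ℝ) ^ γ := by
          gcongr
      _ = K * M ^ B' := by rw [hKdef]; ring
      _ ≤ M := hKM
  -- the key dyadic iteration
  have key : ∀ n : ℕ, ψ ((2:ℝ) ^ (n:ℝ)) ≤ M * (2:ℝ) ^ (-(n:ℝ) * γ) := by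
    intro n
    induction n with
    | zero => simpa using hMψ
    | succ n ih =>
      push_cast
      set kn := (2:ℝ) ^ (n:ℝ) with hkn
      have hkpos : (0:ℝ) < kn := Real.rpow_pos_of_pos two_pos _
      have h2n1 : (2:ℝ) ^ ((n:ℝ) + 1) = 2 * kn := by
        rw [hkn, Real.rpow_add two_pos, Real.rpow_one, mul_comm]
      rw [h2n1]
      set U := M * (2:ℝ) ^ (-(n:ℝ) * γ) with hU
      set T := M * (2:ℝ) ^ (-((n:ℝ) + 1) * γ) with hT
      have hU0 : 0 < U := by
        rw [hU]; positivity
      have hT0 : 0 < T := by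
        rw [hT]; positivity
      rcases le_or_gt (ψ kn) T with hle | hgt
      · exact le_trans (hψ_mono kn (2 * kn) hkpos.le (by linarith)) hle
      · have hψpos : 0 < ψ kn := hT0.trans hgt
        have hψU : ψ kn ≤ U := ih
        have hTfac : T = (2:ℝ) ^ (-γ) * U := by
          rw [hT, hU, show -((n:ℝ) + 1) * γ = (-γ) + (-(n:ℝ) * γ) by ring,
            Real.rpow_add two_pos]
          ring
        have hfactor : ∀ e : ℝ, ψ kn ^ e ≤ (2:ℝ) ^ (γ * |e|) * U ^ e := by
          intro e
          have hmax := rpow_between_bo (e := e) hT0 hgt.le hψU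
          have hUe : (0:ℝ) ≤ U ^ e := Real.rpow_nonneg hU0.le _
          have h2e : (1:ℝ) ≤ (2:ℝ) ^ (γ * |e|) := by
            rw [show (1:ℝ) = (2:ℝ) ^ (0:ℝ) by simp]
            exact Real.rpow_le_rpow_of_exponent_le one_le_two (by positivity)
          have hTe : T ^ e = (2:ℝ) ^ (-γ * e) * U ^ e := by
            rw [hTfac, Real.mul_rpow (by positivity) hU0.le, ← Real.rpow_mul (by norm_num)]
          have h2e' : (2:ℝ) ^ (-γ * e) ≤ (2:ℝ) ^ (γ * |e|) := by
            apply Real.rpow_le_rpow_of_exponent_le one_le_two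
            rcases le_or_gt 0 e with he | he
            · rw [abs_of_nonneg he]; nlinarith [mul_nonneg hγpos.le he]
            · rw [abs_of_neg he]; nlinarith
          rcases max_cases (T ^ e) (U ^ e) with ⟨hm, _⟩ | ⟨hm, _⟩
          · calc ψ kn ^ e ≤ max (T ^ e) (U ^ e) := hmax
              _ = T ^ e := hm
              _ = (2:ℝ) ^ (-γ * e) * U ^ e := hTe
              _ ≤ (2:ℝ) ^ (γ * |e|) * U ^ e := mul_le_mul_of_nonneg_right h2e' hUe
          · calc ψ kn ^ e ≤ max (T ^ e) (U ^ e) := hmax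
              _ = U ^ e := hm
              _ ≤ (2:ℝ) ^ (γ * |e|) * U ^ e := le_mul_of_one_le_left hUe h2e
        have hstep := hineq (2 * kn) kn hkpos.le (by linarith)
        rw [show 2 * kn - kn = kn by ring] at hstep
        have hUB : U ^ B = M ^ B * (2:ℝ) ^ (-(n:ℝ) * γ * B) := by
          rw [hU, Real.mul_rpow hM0.le (Real.rpow_nonneg two_pos.le _),
            ← Real.rpow_mul two_pos.le]
        have hUC : U ^ C = M ^ C * (2:ℝ) ^ (-(n:ℝ) * γ * C) := by
          rw [hU, Real.mul_rpow hM0.le (Real.rpow_nonneg two_pos.le _),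
            ← Real.rpow_mul two_pos.le]
        have hknA : kn ^ A = (2:ℝ) ^ ((n:ℝ) * A) := by
          rw [hkn, ← Real.rpow_mul two_pos.le]
        have hknD : kn ^ D = (2:ℝ) ^ ((n:ℝ) * D) := by
          rw [hkn, ← Real.rpow_mul two_pos.le]
        have hknA0 : (0:ℝ) ≤ kn ^ A := Real.rpow_nonneg hkpos.le _
        have hterm1 : kn ^ A * ψ kn ^ B ≤
            (2:ℝ) ^ (γ * |B|) * M ^ B * ((2:ℝ) ^ ((n:ℝ) * D) * (2:ℝ) ^ (-(n:ℝ) * γ)) := by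
          calc kn ^ A * ψ kn ^ B ≤ kn ^ A * ((2:ℝ) ^ (γ * |B|) * U ^ B) :=
                mul_le_mul_of_nonneg_left (hfactor B) hknA0
            _ = (2:ℝ) ^ (γ * |B|) * M ^ B * ((2:ℝ) ^ ((n:ℝ) * A) * (2:ℝ) ^ (-(n:ℝ) * γ * B)) := by
                rw [hknA, hUB]; ring
            _ = (2:ℝ) ^ (γ * |B|) * M ^ B * ((2:ℝ) ^ ((n:ℝ) * D) * (2:ℝ) ^ (-(n:ℝ) * γ)) := by
                rw [← Real.rpow_add two_pos, ← Real.rpow_add two_pos,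
                  show (n:ℝ) * A + -(n:ℝ) * γ * B = (n:ℝ) * D + -(n:ℝ) * γ from by
                    linear_combination (n:ℝ) * hγ1]
        have hterm2 : ψ kn ^ C ≤
            (2:ℝ) ^ (γ * |C|) * M ^ C * ((2:ℝ) ^ ((n:ℝ) * D) * (2:ℝ) ^ (-(n:ℝ) * γ)) := by
          calc ψ kn ^ C ≤ (2:ℝ) ^ (γ * |C|) * U ^ C := hfactor C
            _ = (2:ℝ) ^ (γ * |C|) * M ^ C * (2:ℝ) ^ (-(n:ℝ) * γ * C) := by
                rw [hUC]; ring
            _ = (2:ℝ) ^ (γ * |C|) * M ^ C * ((2:ℝ) ^ ((n:ℝ) * D) * (2:ℝ) ^ (-(n:ℝ) * γ)) := by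
                rw [← Real.rpow_add two_pos,
                  show -(n:ℝ) * γ * C = (n:ℝ) * D + -(n:ℝ) * γ from by
                    linear_combination (n:ℝ) * hγ2]
        have hX : ((2:ℝ) ^ ((n:ℝ) * D)) ≠ 0 := (Real.rpow_pos_of_pos two_pos _).ne'
        calc ψ (2 * kn) ≤ c * (kn ^ A * ψ kn ^ B + ψ kn ^ C) / kn ^ D := hstep
          _ ≤ c * (((2:ℝ) ^ (γ * |B|) * M ^ B + (2:ℝ) ^ (γ * |C|) * M ^ C) *
                ((2:ℝ) ^ ((n:ℝ) * D) * (2:ℝ) ^ (-(n:ℝ) * γ))) / kn ^ D := by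
              gcongr c * ?_ / kn ^ D
              · rw [add_mul]
                exact add_le_add hterm1 hterm2
          _ = c * ((2:ℝ) ^ (γ * |B|) * M ^ B + (2:ℝ) ^ (γ * |C|) * M ^ C) *
                (2:ℝ) ^ (-(n:ℝ) * γ) := by
              rw [hknD]
              field_simp
          _ ≤ (M * (2:ℝ) ^ (-γ)) * (2:ℝ) ^ (-(n:ℝ) * γ) := by
              apply mul_le_mul_of_nonneg_right _ (Real.rpow_nonneg two_pos.le _)
              calc c * ((2:ℝ) ^ (γ * |B|) * M ^ B + (2:ℝ) ^ (γ * |C|) * M ^ C)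
                  = (c * ((2:ℝ) ^ (γ * |B|) * M ^ B + (2:ℝ) ^ (γ * |C|) * M ^ C) *
                      (2:ℝ) ^ γ) * (2:ℝ) ^ (-γ) := by
                    rw [mul_assoc, ← Real.rpow_add two_pos]
                    simp
                _ ≤ M * (2:ℝ) ^ (-γ) :=
                    mul_le_mul_of_nonneg_right hMcond (Real.rpow_nonneg two_pos.le _)
          _ = T := by
              rw [hT, mul_assoc, ← Real.rpow_add two_pos,
                show -γ + -(n:ℝ) * γ = -((n:ℝ) + 1) * γ from by ring]
  refine ⟨1, zero_le_one, M * (2:ℝ) ^ γ, by positivity, ?_⟩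
  intro k hk
  have hk0 : (0:ℝ) < k := lt_of_lt_of_le one_pos hk
  have hexpneg : -(D - A) / (1 - B) = -γ := by rw [neg_div, hγdef]
  constructor
  · set n := ⌊Real.logb 2 k⌋₊ with hn
    have hlog0 : 0 ≤ Real.logb 2 k := Real.logb_nonneg one_lt_two hk
    have hn1 : (n:ℝ) ≤ Real.logb 2 k := Nat.floor_le hlog0
    have hn2 : Real.logb 2 k < (n:ℝ) + 1 := Nat.lt_floor_add_one _
    have hrk : (2:ℝ) ^ Real.logb 2 k = k := Real.rpow_logb two_pos (by norm_num) hk0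
    have hk1 : (2:ℝ) ^ (n:ℝ) ≤ k := by
      rw [← hrk]; exact Real.rpow_le_rpow_of_exponent_le one_le_two hn1
    have hk2 : k ≤ (2:ℝ) ^ ((n:ℝ) + 1) := by
      rw [← hrk]; exact Real.rpow_le_rpow_of_exponent_le one_le_two hn2.le
    have h1 : ψ k ≤ ψ ((2:ℝ) ^ (n:ℝ)) := hψ_mono _ _ (by positivity) hk1
    have h3 : (2:ℝ) ^ (-(n:ℝ) * γ) = (2:ℝ) ^ γ * ((2:ℝ) ^ ((n:ℝ) + 1)) ^ (-γ) := by
      rw [← Real.rpow_mul two_pos.le, ← Real.rpow_add two_pos,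
        show γ + ((n:ℝ) + 1) * -γ = -(n:ℝ) * γ from by ring]
    have h4 : ((2:ℝ) ^ ((n:ℝ) + 1)) ^ (-γ) ≤ k ^ (-γ) :=
      Real.rpow_le_rpow_of_nonpos hk0 hk2 (by linarith)
    rw [hexpneg]
    calc ψ k ≤ M * (2:ℝ) ^ (-(n:ℝ) * γ) := h1.trans (key n)
      _ = M * (2:ℝ) ^ γ * ((2:ℝ) ^ ((n:ℝ) + 1)) ^ (-γ) := by rw [h3]; ring
      _ ≤ M * (2:ℝ) ^ γ * k ^ (-γ) := by
          apply mul_le_mul_of_nonneg_left h4 (by positivity)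
  · rw [neg_div, neg_div, ← hγdef, hexp]
end

section
/- Let k₀ ≥ 0 and let ψ : [k₀,∞) → [0,∞) be non-increasing. Suppose there are positive constants c₁, A, D with A < D and exponents B > C > 1 such that ψ(h) ≤ c₁·(h^A·ψ(k)^B + ψ(k)^C)/(h−k)^D for all h > k > k₀. Then there exists a finite L > 0 such that ψ(2L) = 0; explicitly one may take L = max{1, 2k₀, (c₁·2^{1+D}(1+ψ(k₀))^B)^{1/(D−A)}, (c₁^{C/(C−1)}(1+ψ(k₀))^B·2^{D+1+(A+D+1)/(C−1)+D/(C−1)²})^{(C−1)/((D−A)C)}}. -/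
open Real Filter Topology Set

set_option maxHeartbeats 1000000 in
/-- Generalized lemma, part iii): the case B > C > 1, vanishing at level 2L. -/
theorem generalized_lemma_part_iii
    (k₀ : ℝ) (hk₀ : 0 ≤ k₀)
    (ψ : ℝ → ℝ) (c₁ A B C D : ℝ)
    (hψ_nonneg : ∀ k, k₀ ≤ k → 0 ≤ ψ k)
    (hψ_mono : ∀ k h, k₀ ≤ k → k ≤ h → ψ h ≤ ψ k)
    (hc₁ : 0 < c₁) (hA : 0 < A) (hAD : A < D)
    (hC : 1 < C) (hCB : C < B)
    (hineq : ∀ h k, k₀ < k → k < h →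
      ψ h ≤ c₁ * (h ^ A * ψ k ^ B + ψ k ^ C) / (h - k) ^ D) :
    ∃ L > (0 : ℝ),
      L = max 1 (max (2 * k₀)
        (max ((c₁ * 2 ^ (1 + D) * (1 + ψ k₀) ^ B) ^ (1 / (D - A)))
          ((c₁ ^ (C / (C - 1)) * (1 + ψ k₀) ^ B *
            2 ^ (D + 1 + (A + D + 1) / (C - 1) + D / (C - 1) ^ 2)) ^
              ((C - 1) / ((D - A) * C))))) ∧
      ψ (2 * L) = 0 := by
  have hψk₀ : 0 ≤ ψ k₀ := hψ_nonneg k₀ le_rfl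
  set P : ℝ := 1 + ψ k₀ with hP_def
  have hP1 : 1 ≤ P := by simp only [hP_def]; linarith
  have hP0 : 0 < P := lt_of_lt_of_le one_pos hP1
  set δ : ℝ := C - 1 with hδ_def
  have hδ0 : 0 < δ := by simp only [hδ_def]; linarith
  have hCδ : C = δ + 1 := by simp only [hδ_def]; ring
  have hDA : 0 < D - A := by linarith
  have hD0 : 0 < D := hA.trans hAD
  have hC0 : 0 < C := lt_trans one_pos hC
  have hB0 : 0 < B := lt_trans hC0 hCB
  set L : ℝ := max 1 (max (2 * k₀)
      (max ((c₁ * 2 ^ (1 + D) * P ^ B) ^ (1 / (D - A)))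
        ((c₁ ^ (C / δ) * P ^ B *
          2 ^ (D + 1 + (A + D + 1) / δ + D / δ ^ 2)) ^ (δ / ((D - A) * C))))) with hL_def
  have hL1 : (1:ℝ) ≤ L := le_max_left _ _
  have hL0 : (0:ℝ) < L := lt_of_lt_of_le one_pos hL1
  have hLk : 2 * k₀ ≤ L := le_trans (le_max_left _ _) (le_max_right _ _)
  have hk₀L : k₀ < L := by linarith
  have hX1L : (c₁ * 2 ^ (1 + D) * P ^ B) ^ (1 / (D - A)) ≤ L :=
    le_trans (le_trans (le_max_left _ _) (le_max_right _ _)) (le_max_right _ _)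
  have hX2L : (c₁ ^ (C / δ) * P ^ B *
      2 ^ (D + 1 + (A + D + 1) / δ + D / δ ^ 2)) ^ (δ / ((D - A) * C)) ≤ L :=
    le_trans (le_trans (le_max_right _ _) (le_max_right _ _)) (le_max_right _ _)
  refine ⟨L, hL0, rfl, ?_⟩
  clear_value L
  clear hL_def
  clear_value P δ
  -- positivity helpers
  have h2pow : ∀ y : ℝ, (0:ℝ) < (2:ℝ) ^ y := fun y => Real.rpow_pos_of_pos two_pos y
  have hLpow : ∀ y : ℝ, (0:ℝ) < L ^ y := fun y => Real.rpow_pos_of_pos hL0 y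
  have hPpow : ∀ y : ℝ, (0:ℝ) < P ^ y := fun y => Real.rpow_pos_of_pos hP0 y
  have hcpow : ∀ y : ℝ, (0:ℝ) < c₁ ^ y := fun y => Real.rpow_pos_of_pos hc₁ y
  have hne2 : ∀ y : ℝ, (2:ℝ) ^ y ≠ 0 := fun y => (h2pow y).ne'
  have hneL : ∀ y : ℝ, L ^ y ≠ 0 := fun y => (hLpow y).ne'
  have hneP : ∀ y : ℝ, P ^ y ≠ 0 := fun y => (hPpow y).ne'
  have hnec : ∀ y : ℝ, c₁ ^ y ≠ 0 := fun y => (hcpow y).ne'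
  have htwo : (2:ℝ) ≠ 0 := two_ne_zero
  have hlog2 : ∀ y : ℝ, Real.log ((2:ℝ) ^ y) = y * Real.log 2 := fun y =>
    Real.log_rpow two_pos y
  have hlogL : ∀ y : ℝ, Real.log (L ^ y) = y * Real.log L := fun y => Real.log_rpow hL0 y
  have hlogP : ∀ y : ℝ, Real.log (P ^ y) = y * Real.log P := fun y => Real.log_rpow hP0 y
  have hlogc : ∀ y : ℝ, Real.log (c₁ ^ y) = y * Real.log c₁ := fun y => Real.log_rpow hc₁ y
  -- extraction of the two power inequalities
  have hX1pos : (0:ℝ) < c₁ * 2 ^ (1 + D) * P ^ B := by positivity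
  have h3 : c₁ * 2 ^ (1 + D) * P ^ B ≤ L ^ (D - A) := by
    have h := Real.rpow_le_rpow (by positivity) hX1L hDA.le
    rwa [one_div, Real.rpow_inv_rpow hX1pos.le hDA.ne'] at h
  have hYpos : (0:ℝ) < c₁ ^ (C / δ) * P ^ B * 2 ^ (D + 1 + (A + D + 1) / δ + D / δ ^ 2) := by
    positivity
  have h4 : (c₁ ^ (C / δ) * P ^ B * 2 ^ (D + 1 + (A + D + 1) / δ + D / δ ^ 2)) ^ δ
      ≤ L ^ ((D - A) * C) := by
    have h := Real.rpow_le_rpow (by positivity) hX2L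
      (by positivity : (0:ℝ) ≤ (D - A) * C)
    rwa [← Real.rpow_mul hYpos.le, div_mul_cancel₀ _ (by positivity : ((D - A) * C) ≠ 0)] at h
  have h4' : c₁ ^ C * P ^ (B * δ) * 2 ^ ((D + 1) * δ + (A + D + 1) + D / δ)
      ≤ L ^ ((D - A) * C) := by
    refine le_trans (le_of_eq ?_) h4
    rw [Real.mul_rpow (by positivity) (by positivity),
        Real.mul_rpow (by positivity) (by positivity),
        ← Real.rpow_mul hc₁.le, ← Real.rpow_mul hP0.le,
        ← Real.rpow_mul (by norm_num : (0:ℝ) ≤ 2),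
        div_mul_cancel₀ _ hδ0.ne']
    congr 1
    congr 1
    field_simp
  have h4log : C * Real.log c₁ + B * δ * Real.log P +
      ((D + 1) * δ + (A + D + 1) + D / δ) * Real.log 2 ≤ (D - A) * C * Real.log L := by
    have h := Real.log_le_log (by positivity) h4'
    rwa [Real.log_mul (by positivity) (by positivity),
      Real.log_mul (by positivity) (by positivity),
      hlogc, hlogP, hlog2, hlogL] at h
  -- the key constants
  set S : ℝ := L ^ (D - A) / (c₁ * 2 ^ (A + D + 1 + D / δ)) with hS_def
  have hS0 : 0 < S := by
    rw [hS_def]; exact div_pos (hLpow _) (by positivity)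
  set q : ℝ := (2:ℝ) ^ (-(D / δ)) with hq_def
  have hq0 : 0 < q := h2pow _
  have hq1 : q < 1 := Real.rpow_lt_one_of_one_lt_of_neg one_lt_two
    (neg_lt_zero.mpr (by positivity))
  set e : ℝ := min 1 (S ^ δ⁻¹) with he_def
  have he0 : 0 < e := lt_min one_pos (Real.rpow_pos_of_pos hS0 _)
  have he1 : e ≤ 1 := min_le_left _ _
  have heS : e ≤ S ^ δ⁻¹ := min_le_right _ _
  clear_value S q e
  have heδ : e ^ δ ≤ S := by
    calc e ^ δ ≤ (S ^ δ⁻¹) ^ δ := Real.rpow_le_rpow he0.le heS hδ0.le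
      _ = S := Real.rpow_inv_rpow hS0.le hδ0.ne'
  -- base estimate at L
  have hL2 : (0:ℝ) < L / 2 := by linarith
  have hbase : ψ L ≤ c₁ * (L ^ A * P ^ B + P ^ B) / (L / 2) ^ D := by
    have htend : Tendsto (fun t : ℝ => c₁ * (L ^ A * P ^ B + P ^ B) / (L / 2 - t) ^ D)
        (𝓝[>] 0) (𝓝 (c₁ * (L ^ A * P ^ B + P ^ B) / (L / 2) ^ D)) := by
      have hc : ContinuousAt (fun t : ℝ => c₁ * (L ^ A * P ^ B + P ^ B) / (L / 2 - t) ^ D) 0 := by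
        apply ContinuousAt.div continuousAt_const
        · exact (Real.continuousAt_rpow_const (L / 2 - 0) D
            (Or.inl (by simpa using hL2.ne'))).comp
            (continuousAt_const.sub continuousAt_id)
        · simpa using (Real.rpow_pos_of_pos (by simpa using hL2) D).ne'
      have := hc.tendsto.mono_left (nhdsWithin_le_nhds : 𝓝[>] (0:ℝ) ≤ 𝓝 0)
      simpa using this
    refine ge_of_tendsto htend ?_
    filter_upwards [Ioo_mem_nhdsGT_of_mem
      (⟨le_refl (0:ℝ), hL2⟩ : (0:ℝ) ∈ Set.Ico 0 (L / 2))] with t ht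
    obtain ⟨ht0, htL⟩ := ht
    have hkk1 : k₀ < L / 2 + t := by linarith
    have hkh : L / 2 + t < L := by linarith
    have h := hineq L (L / 2 + t) hkk1 hkh
    have hψt0 : 0 ≤ ψ (L / 2 + t) := hψ_nonneg _ (by linarith)
    have hψtP : ψ (L / 2 + t) ≤ P := by
      have := hψ_mono k₀ (L / 2 + t) le_rfl (by linarith)
      simp only [hP_def]; linarith
    have hsub : L - (L / 2 + t) = L / 2 - t := by ring
    rw [hsub] at h
    refine h.trans ?_
    gcongr
    all_goals first
      | exact Real.rpow_nonneg (by linarith) _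
      | exact (hLpow A).le
      | exact Real.rpow_le_rpow hψt0 hψtP hB0.le
      | exact le_trans (Real.rpow_le_rpow hψt0 hψtP hC0.le)
          (Real.rpow_le_rpow_of_exponent_le hP1 hCB.le)
      | positivity
  have h1L : (1:ℝ) ≤ L ^ A := by
    calc (1:ℝ) = 1 ^ A := (Real.one_rpow A).symm
      _ ≤ L ^ A := Real.rpow_le_rpow zero_le_one hL1 hA.le
  have hβ : ψ L ≤ c₁ * 2 ^ (1 + D) * P ^ B / L ^ (D - A) := by
    refine hbase.trans ?_
    have h1 : c₁ * (L ^ A * P ^ B + P ^ B) / (L / 2) ^ D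
        ≤ c₁ * (2 * (L ^ A * P ^ B)) / (L / 2) ^ D := by
      gcongr
      all_goals first
        | exact Real.rpow_nonneg hL2.le _
        | nlinarith [hPpow B, hLpow A]
        | positivity
    refine h1.trans (le_of_eq ?_)
    have hl : (0:ℝ) < c₁ * (2 * (L ^ A * P ^ B)) / (L / 2) ^ D :=
      div_pos (by positivity) (Real.rpow_pos_of_pos hL2 _)
    have hr : (0:ℝ) < c₁ * 2 ^ (1 + D) * P ^ B / L ^ (D - A) :=
      div_pos (by positivity) (hLpow _)
    rw [← Real.exp_log hl, ← Real.exp_log hr]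
    congr 1
    have hlogL2 : ∀ y : ℝ, Real.log ((L / 2) ^ y) = y * (Real.log L - Real.log 2) := fun y => by
      rw [Real.log_rpow hL2, Real.log_div hL0.ne' htwo]
    have hneL2 : ∀ y : ℝ, ((L:ℝ) / 2) ^ y ≠ 0 := fun y => (Real.rpow_pos_of_pos hL2 y).ne'
    simp only [Real.log_mul, Real.log_div, hlog2, hlogL, hlogP, hlogc, hlogL2, ne_eq,
      mul_ne_zero_iff, div_ne_zero_iff, hne2, hneL, hneP, hnec, hneL2, hc₁.ne', hP0.ne',
      hL0.ne', htwo, not_false_iff, and_true, true_and, and_self]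
    ring
  have hψL1 : ψ L ≤ 1 := by
    refine hβ.trans ?_
    rw [div_le_one (hLpow _)]
    exact h3
  have hβS : c₁ * 2 ^ (1 + D) * P ^ B / L ^ (D - A) ≤ S ^ δ⁻¹ := by
    have hβ0 : (0:ℝ) < c₁ * 2 ^ (1 + D) * P ^ B / L ^ (D - A) :=
      div_pos hX1pos (hLpow _)
    have key : (c₁ * 2 ^ (1 + D) * P ^ B / L ^ (D - A)) ^ δ ≤ S := by
      rw [← Real.log_le_log_iff (Real.rpow_pos_of_pos hβ0 δ) hS0]
      rw [Real.log_rpow hβ0, hS_def]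
      simp only [Real.log_mul, Real.log_div, hlog2, hlogL, hlogP, hlogc, ne_eq,
        mul_ne_zero_iff, div_ne_zero_iff, hne2, hneL, hneP, hnec, hc₁.ne', hP0.ne',
        hL0.ne', htwo, not_false_iff, and_true, true_and, and_self]
      rw [hCδ] at h4log
      linarith [h4log]
    calc c₁ * 2 ^ (1 + D) * P ^ B / L ^ (D - A)
        = ((c₁ * 2 ^ (1 + D) * P ^ B / L ^ (D - A)) ^ δ) ^ δ⁻¹ := by
          rw [Real.rpow_rpow_inv hβ0.le hδ0.ne']
      _ ≤ S ^ δ⁻¹ := Real.rpow_le_rpow (Real.rpow_pos_of_pos hβ0 δ).le key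
          (by positivity)
  have hψLe : ψ L ≤ e := by
    rw [he_def]
    exact le_min hψL1 (hβ.trans hβS)
  -- the iteration ladder
  set kk : ℕ → ℝ := fun n => 2 * L - L * (2:ℝ)⁻¹ ^ n with hkk_def
  have hkk0 : kk 0 = L := by simp only [hkk_def, pow_zero]; ring
  have hkkL : ∀ n, L ≤ kk n := by
    intro n
    have h1 : ((2:ℝ)⁻¹) ^ n ≤ 1 := pow_le_one₀ (by norm_num) (by norm_num)
    simp only [hkk_def]
    nlinarith
  have hkk2L : ∀ n, kk n ≤ 2 * L := by
    intro n
    have h2 : (0:ℝ) < ((2:ℝ)⁻¹) ^ n := by positivity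
    simp only [hkk_def]
    nlinarith
  have hkkmono : ∀ n, kk n < kk (n + 1) := by
    intro n
    have h2 : (0:ℝ) < ((2:ℝ)⁻¹) ^ n := by positivity
    simp only [hkk_def, pow_succ]
    nlinarith
  have hkkdiff : ∀ n, kk (n + 1) - kk n = L * (2:ℝ)⁻¹ ^ (n + 1) := by
    intro n
    simp only [hkk_def, pow_succ]
    ring
  clear_value kk
  -- the main induction
  have main : ∀ n, ψ (kk n) ≤ e * q ^ n := by
    intro n
    induction n with
    | zero => simpa [hkk0] using hψLe
    | succ n ih =>
      set u : ℝ := e * q ^ n with hu_def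
      have hu0 : 0 < u := mul_pos he0 (pow_pos hq0 n)
      have hqn1 : q ^ n ≤ 1 := pow_le_one₀ hq0.le hq1.le
      have hu1 : u ≤ 1 := by
        rw [hu_def]
        calc e * q ^ n ≤ 1 * 1 := mul_le_mul he1 hqn1 (pow_nonneg hq0.le n) zero_le_one
          _ = 1 := by ring
      clear_value u
      have hx0 : 0 ≤ ψ (kk n) := hψ_nonneg _ (le_trans hk₀L.le (hkkL n))
      have hxu : ψ (kk n) ≤ u := ih
      have h := hineq (kk (n + 1)) (kk n) (lt_of_lt_of_le hk₀L (hkkL n)) (hkkmono n)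
      rw [hkkdiff n] at h
      have hxC : ψ (kk n) ^ C ≤ u ^ C := Real.rpow_le_rpow hx0 hxu hC0.le
      have hxB : ψ (kk n) ^ B ≤ u ^ C := by
        rcases eq_or_lt_of_le hx0 with h0 | h0
        · rw [← h0, Real.zero_rpow hB0.ne']
          exact (Real.rpow_pos_of_pos hu0 C).le
        · calc ψ (kk n) ^ B ≤ ψ (kk n) ^ C :=
              Real.rpow_le_rpow_of_exponent_ge h0 (hxu.trans hu1) hCB.le
            _ ≤ u ^ C := hxC
      have hkA : (kk (n + 1)) ^ A ≤ (2 * L) ^ A :=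
        Real.rpow_le_rpow (le_trans hL0.le (hkkL (n + 1))) (hkk2L (n + 1)) hA.le
      have hdenpos : (0:ℝ) < (L * (2:ℝ)⁻¹ ^ (n + 1)) ^ D :=
        Real.rpow_pos_of_pos (mul_pos hL0 (by positivity)) _
      have hstep1 : ψ (kk (n + 1))
          ≤ c₁ * ((2 * L) ^ A * u ^ C + u ^ C) / (L * (2:ℝ)⁻¹ ^ (n + 1)) ^ D := by
        refine h.trans ?_
        gcongr
        all_goals first
          | exact hdenpos.le
          | exact hkA
          | exact hxB
          | exact hxC
          | exact (Real.rpow_pos_of_pos hu0 C).le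
          | exact le_trans hL0.le (hkkL (n + 1))
          | positivity
      have huC0 : (0:ℝ) ≤ u ^ C := (Real.rpow_pos_of_pos hu0 C).le
      have hsum : (2 * L) ^ A * u ^ C + u ^ C ≤ 2 ^ (A + 1) * L ^ A * u ^ C := by
        have h2L : (2 * L) ^ A = 2 ^ A * L ^ A := Real.mul_rpow (by norm_num) hL0.le
        have h12 : (1:ℝ) ≤ 2 ^ A := by
          calc (1:ℝ) = 1 ^ A := (Real.one_rpow A).symm
            _ ≤ 2 ^ A := Real.rpow_le_rpow zero_le_one one_le_two hA.le
        have h2A1 : (2:ℝ) ^ (A + 1) = 2 ^ A * 2 := by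
          rw [Real.rpow_add two_pos, Real.rpow_one]
        have hge1 : (1:ℝ) ≤ 2 ^ A * L ^ A := by
          calc (1:ℝ) = 1 * 1 := by ring
            _ ≤ 2 ^ A * L ^ A := mul_le_mul h12 h1L zero_le_one (by linarith)
        have h5 : u ^ C ≤ 2 ^ A * L ^ A * u ^ C := by
          have := mul_le_mul_of_nonneg_right hge1 huC0
          linarith
        rw [h2L, h2A1]
        linarith [h5]
      have huCδ : u ^ C = u ^ δ * u := by
        rw [hCδ, Real.rpow_add hu0, Real.rpow_one]
      have hqnδ : ((q : ℝ) ^ n) ^ δ = (2:ℝ) ^ (-(D * n)) := by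
        have hqn : (q : ℝ) ^ n = (2:ℝ) ^ (-(D / δ) * (n : ℝ)) := by
          rw [hq_def, Real.rpow_mul (by norm_num : (0:ℝ) ≤ 2), Real.rpow_natCast]
        rw [hqn, ← Real.rpow_mul (by norm_num : (0:ℝ) ≤ 2)]
        congr 1
        field_simp
      have huδ : u ^ δ ≤ S * (2:ℝ) ^ (-(D * n)) := by
        rw [hu_def, Real.mul_rpow he0.le (pow_nonneg hq0.le n), hqnδ]
        exact mul_le_mul_of_nonneg_right heδ (h2pow _).le
      have h2inv : ((2:ℝ)⁻¹) ^ (n + 1) = (2:ℝ) ^ (-((n : ℝ) + 1)) := by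
        rw [inv_pow, ← Real.rpow_natCast 2 (n + 1), ← Real.rpow_neg (by norm_num)]
        push_cast
        ring_nf
      have hden : (L * (2:ℝ)⁻¹ ^ (n + 1)) ^ D = L ^ D * (2:ℝ) ^ (-(((n : ℝ) + 1) * D)) := by
        rw [Real.mul_rpow hL0.le (by positivity), h2inv,
          ← Real.rpow_mul (by norm_num : (0:ℝ) ≤ 2)]
        congr 2
        ring
      have hkey : c₁ * (2 ^ (A + 1) * L ^ A * (S * (2:ℝ) ^ (-(D * n))))
          ≤ q * (L ^ D * (2:ℝ) ^ (-(((n : ℝ) + 1) * D))) := by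
        refine le_of_eq ?_
        have hl : (0:ℝ) < c₁ * (2 ^ (A + 1) * L ^ A * (S * (2:ℝ) ^ (-(D * n)))) :=
          mul_pos hc₁ (mul_pos (mul_pos (h2pow _) (hLpow _)) (mul_pos hS0 (h2pow _)))
        have hr : (0:ℝ) < q * (L ^ D * (2:ℝ) ^ (-(((n : ℝ) + 1) * D))) :=
          mul_pos hq0 (mul_pos (hLpow _) (h2pow _))
        rw [← Real.exp_log hl, ← Real.exp_log hr]
        congr 1
        rw [hS_def, hq_def]
        simp only [Real.log_mul, Real.log_div, hlog2, hlogL, hlogP, hlogc, ne_eq,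
          mul_ne_zero_iff, div_ne_zero_iff, hne2, hneL, hneP, hnec, hc₁.ne', hP0.ne',
          hL0.ne', htwo, not_false_iff, and_true, true_and, and_self]
        field_simp
        ring
      have htarget : c₁ * ((2 * L) ^ A * u ^ C + u ^ C) / (L * (2:ℝ)⁻¹ ^ (n + 1)) ^ D
          ≤ u * q := by
        rw [div_le_iff₀ hdenpos]
        calc c₁ * ((2 * L) ^ A * u ^ C + u ^ C)
            ≤ c₁ * (2 ^ (A + 1) * L ^ A * u ^ C) :=
              mul_le_mul_of_nonneg_left hsum hc₁.le
          _ = c₁ * (2 ^ (A + 1) * L ^ A * (u ^ δ * u)) := by rw [huCδ]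
          _ ≤ c₁ * (2 ^ (A + 1) * L ^ A * ((S * (2:ℝ) ^ (-(D * n))) * u)) := by
              gcongr
              all_goals first
                | exact hu0.le
                | exact huδ
                | exact (hLpow A).le
                | exact (h2pow (A+1)).le
                | positivity
          _ = (c₁ * (2 ^ (A + 1) * L ^ A * (S * (2:ℝ) ^ (-(D * n))))) * u := by ring
          _ ≤ (q * (L ^ D * (2:ℝ) ^ (-(((n : ℝ) + 1) * D)))) * u :=
              mul_le_mul_of_nonneg_right hkey hu0.le
          _ = u * q * (L ^ D * (2:ℝ) ^ (-(((n : ℝ) + 1) * D))) := by ring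
          _ = u * q * (L * (2:ℝ)⁻¹ ^ (n + 1)) ^ D := by rw [hden]
      calc ψ (kk (n + 1)) ≤ u * q := hstep1.trans htarget
        _ = e * q ^ (n + 1) := by rw [hu_def, pow_succ]; ring
  -- conclusion
  have hlim : Tendsto (fun n : ℕ => e * q ^ n) atTop (𝓝 0) := by
    have := (tendsto_pow_atTop_nhds_zero_of_lt_one hq0.le hq1).const_mul e
    simpa using this
  have hub : ∀ n : ℕ, ψ (2 * L) ≤ e * q ^ n := fun n =>
    (hψ_mono (kk n) (2 * L) (le_trans hk₀L.le (hkkL n)) (hkk2L n)).trans (main n)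
  have h0 : ψ (2 * L) ≤ 0 := ge_of_tendsto hlim (Filter.Eventually.of_forall hub)
  have h0' : 0 ≤ ψ (2 * L) := hψ_nonneg _ (by linarith)
  linarith
end

section
/- Let k₀ ≥ 0 and ψ : [k₀,∞) → [0,∞) be non-increasing with positive constants c₁, A, D, A < D, and 0 < C < B < 1 with (D−A)/(1−B) = D/(1−C). Set λ = (D−A)/(1−B) and ρ(k) = k^λ·ψ(k). If ψ(h) ≤ c₁·(h^A ψ(k)^B + ψ(k)^C)/(h−k)^D for all h > k > k₀, then ρ(2k) ≤ c₁·2^{λ+A}·(ρ(k)^B + ρ(k)^C) for all k ≥ k₀ with k > 0. -/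
/-- Doubling inequality for the rescaled function ρ(k) = k^λ ψ(k). -/
theorem rescaled_doubling_inequality
    (k₀ : ℝ) (hk₀ : 0 ≤ k₀)
    (ψ : ℝ → ℝ) (c₁ A B C D : ℝ)
    (hψ_nonneg : ∀ k, k₀ ≤ k → 0 ≤ ψ k)
    (hψ_mono : ∀ k h, k₀ ≤ k → k ≤ h → ψ h ≤ ψ k)
    (hc₁ : 0 < c₁) (hA : 0 < A) (hAD : A < D)
    (hC : 0 < C) (hCB : C < B) (hB1 : B < 1)
    (hexp : (D - A) / (1 - B) = D / (1 - C))
    (hineq : ∀ h k, k₀ < k → k < h →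
      ψ h ≤ c₁ * (h ^ A * ψ k ^ B + ψ k ^ C) / (h - k) ^ D) :
    ∀ k, k₀ ≤ k → 0 < k →
      (2 * k) ^ ((D - A) / (1 - B)) * ψ (2 * k) ≤
        c₁ * 2 ^ ((D - A) / (1 - B) + A) *
          ((k ^ ((D - A) / (1 - B)) * ψ k) ^ B +
            (k ^ ((D - A) / (1 - B)) * ψ k) ^ C) := by
  intro k hk₀k hkpos
  set lam := (D - A) / (1 - B) with hlam
  have hB1' : (0:ℝ) < 1 - B := by linarith
  have hC1' : (0:ℝ) < 1 - C := by linarith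
  have hDA : 0 < D - A := by linarith
  have hlampos : 0 < lam := div_pos hDA hB1'
  have h1 : lam * (1 - B) = D - A := div_mul_cancel₀ _ hB1'.ne'
  have h2 : lam * (1 - C) = D := by rw [hexp]; exact div_mul_cancel₀ _ hC1'.ne'
  have hlB : lam * B = lam + A - D := by nlinarith [h1]
  have hlC : lam * C = lam - D := by nlinarith [h2]
  have hψk : 0 ≤ ψ k := hψ_nonneg k hk₀k
  have h2k : k < 2 * k := by linarith
  have hkD : (0:ℝ) < k ^ D := Real.rpow_pos_of_pos hkpos D
  -- key estimate via a limit argument (covers the boundary case k = k₀)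
  have key : ψ (2 * k) ≤ c₁ * ((2 * k) ^ A * ψ k ^ B + ψ k ^ C) / k ^ D := by
    set L := c₁ * ((2 * k) ^ A * ψ k ^ B + ψ k ^ C) with hL
    have htend : Filter.Tendsto (fun t => L / (2 * k - t) ^ D)
        (nhdsWithin k (Set.Ioi k)) (nhds (L / k ^ D)) := by
      have h1t : Filter.Tendsto (fun t : ℝ => 2 * k - t)
          (nhdsWithin k (Set.Ioi k)) (nhds k) := by
        have h0 : Filter.Tendsto (fun t : ℝ => 2 * k - t) (nhds k) (nhds (2 * k - k)) :=
          Continuous.tendsto (by continuity) k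
        have h0' := h0.mono_left (nhdsWithin_le_nhds (s := Set.Ioi k))
        have he : 2 * k - k = k := by ring
        rwa [he] at h0'
      have h2t : Filter.Tendsto (fun t : ℝ => (2 * k - t) ^ D)
          (nhdsWithin k (Set.Ioi k)) (nhds (k ^ D)) :=
        ((Real.continuousAt_rpow_const k D (Or.inl hkpos.ne')).tendsto).comp h1t
      exact Filter.Tendsto.div tendsto_const_nhds h2t hkD.ne'
    refine ge_of_tendsto htend ?_
    filter_upwards [Ioo_mem_nhdsGT_of_mem (Set.left_mem_Ico.mpr h2k)] with t ht
    obtain ⟨htk, ht2k⟩ := ht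
    have hψt : 0 ≤ ψ t := hψ_nonneg t (le_trans hk₀k htk.le)
    have hψtk : ψ t ≤ ψ k := hψ_mono k t hk₀k htk.le
    refine (hineq (2 * k) t (lt_of_le_of_lt hk₀k htk) ht2k).trans ?_
    rw [hL]
    have hden : (0:ℝ) < (2 * k - t) ^ D := Real.rpow_pos_of_pos (by linarith) D
    have h2kA : (0:ℝ) ≤ (2 * k) ^ A := Real.rpow_nonneg (by linarith) A
    have hb : ψ t ^ B ≤ ψ k ^ B := Real.rpow_le_rpow hψt hψtk (by linarith)
    have hcpow : ψ t ^ C ≤ ψ k ^ C := Real.rpow_le_rpow hψt hψtk hC.le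
    refine div_le_div_of_nonneg_right ?_ hden.le
    have hnum : (2 * k) ^ A * ψ t ^ B + ψ t ^ C ≤ (2 * k) ^ A * ψ k ^ B + ψ k ^ C := by
      nlinarith [mul_le_mul_of_nonneg_left hb h2kA]
    exact mul_le_mul_of_nonneg_left hnum hc₁.le
  have h2nn : (0:ℝ) ≤ 2 * k := by linarith
  have hklam : (0:ℝ) ≤ k ^ lam := (Real.rpow_pos_of_pos hkpos lam).le
  calc (2 * k) ^ lam * ψ (2 * k)
      ≤ (2 * k) ^ lam * (c₁ * ((2 * k) ^ A * ψ k ^ B + ψ k ^ C) / k ^ D) :=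
        mul_le_mul_of_nonneg_left key (Real.rpow_nonneg h2nn lam)
    _ = c₁ * (2 ^ (lam + A) * (k ^ lam * ψ k) ^ B
          + 2 ^ lam * (k ^ lam * ψ k) ^ C) := by
        rw [Real.mul_rpow (by norm_num) hkpos.le, Real.mul_rpow (by norm_num) hkpos.le,
          Real.mul_rpow hklam hψk, Real.mul_rpow hklam hψk,
          ← Real.rpow_mul hkpos.le, ← Real.rpow_mul hkpos.le, hlB, hlC,
          Real.rpow_add two_pos]
        field_simp
        have e1 : k ^ (lam + A - D) * k ^ D = k ^ lam * k ^ A := by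
          rw [← Real.rpow_add hkpos, ← Real.rpow_add hkpos]; ring_nf
        have e2 : k ^ (lam - D) * k ^ D = k ^ lam := by
          rw [← Real.rpow_add hkpos]; ring_nf
        linear_combination (-(2 ^ A * ψ k ^ B)) * e1 - (ψ k ^ C) * e2
    _ ≤ c₁ * 2 ^ (lam + A) * ((k ^ lam * ψ k) ^ B + (k ^ lam * ψ k) ^ C) := by
        have h2le : (2:ℝ) ^ lam ≤ 2 ^ (lam + A) :=
          Real.rpow_le_rpow_of_exponent_le one_le_two (by linarith)
        have hXB : (0:ℝ) ≤ (k ^ lam * ψ k) ^ B := Real.rpow_nonneg (by positivity) B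
        have hXC : (0:ℝ) ≤ (k ^ lam * ψ k) ^ C := Real.rpow_nonneg (by positivity) C
        have h3 := mul_le_mul_of_nonneg_left (mul_le_mul_of_nonneg_right h2le hXC) hc₁.le
        nlinarith [h3]
end

section
/- Let ρ : (0,∞) → [0,∞) satisfy ρ(2k) ≤ c₁·2^{λ+A}·(ρ(k)^B + ρ(k)^C) for all k ≥ k₀ > 0, where c₁ ≥ 1, λ, A > 0, and 0 < C < B < 1. Then for every integer n ≥ 0, ρ(2^n k₀) ≤ c₁^{1/(1−B)}·2^{(λ+A+1)/(1−B)}·(1+ρ(k₀))^{B^n}. -/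
private lemma one_le_rpow_aux {x t : ℝ} (hx : 1 ≤ x) (ht : 0 ≤ t) : 1 ≤ x ^ t := by
  calc (1:ℝ) = x ^ (0:ℝ) := (Real.rpow_zero x).symm
  _ ≤ x ^ t := Real.rpow_le_rpow_of_exponent_le hx ht

/-- Induction claim: dyadic boundedness under a sublinear doubling recursion. -/
theorem dyadic_bound_of_sublinear_doubling
    (ρ : ℝ → ℝ) (c₁ lam A B C k₀ : ℝ)
    (hρ_nonneg : ∀ k, 0 < k → 0 ≤ ρ k)
    (hc₁ : 1 ≤ c₁) (hlam : 0 < lam) (hA : 0 < A)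
    (hC : 0 < C) (hCB : C < B) (hB1 : B < 1) (hk₀ : 0 < k₀)
    (hdouble : ∀ k, k₀ ≤ k →
      ρ (2 * k) ≤ c₁ * 2 ^ (lam + A) * (ρ k ^ B + ρ k ^ C)) :
    ∀ n : ℕ, ρ (2 ^ n * k₀) ≤
      c₁ ^ (1 / (1 - B)) * 2 ^ ((lam + A + 1) / (1 - B)) *
        (1 + ρ k₀) ^ (B ^ n) := by
  have hc₁0 : (0:ℝ) < c₁ := lt_of_lt_of_le one_pos hc₁
  have hB0 : (0:ℝ) < B := hC.trans hCB
  have h1B : (0:ℝ) < 1 - B := by linarith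
  have h2 : (0:ℝ) < 2 := two_pos
  set M := c₁ ^ (1 / (1 - B)) * 2 ^ ((lam + A + 1) / (1 - B)) with hMdef
  have hM0 : 0 < M := mul_pos (Real.rpow_pos_of_pos hc₁0 _) (Real.rpow_pos_of_pos h2 _)
  have hdivnn : (0:ℝ) ≤ 1 / (1 - B) := by positivity
  have hM1 : (1:ℝ) ≤ M :=
    one_le_mul_of_one_le_of_one_le (one_le_rpow_aux hc₁ hdivnn)
      (one_le_rpow_aux (by norm_num) (by positivity))
  have hρk₀ := hρ_nonneg k₀ hk₀
  have hbase1 : (1:ℝ) ≤ 1 + ρ k₀ := by linarith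
  have hkey : c₁ * 2 ^ (lam + A + 1) * M ^ B = M := by
    rw [hMdef, Real.mul_rpow (Real.rpow_pos_of_pos hc₁0 _).le (Real.rpow_pos_of_pos h2 _).le,
      ← Real.rpow_mul hc₁0.le, ← Real.rpow_mul h2.le]
    have e1 : c₁ * c₁ ^ (1 / (1 - B) * B) = c₁ ^ (1 / (1 - B)) := by
      have he : (1:ℝ) + 1 / (1 - B) * B = 1 / (1 - B) := by
        field_simp
        ring
      have h' : c₁ ^ ((1:ℝ) + 1 / (1 - B) * B) = c₁ * c₁ ^ (1 / (1 - B) * B) := by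
        rw [Real.rpow_add hc₁0, Real.rpow_one]
      rw [← h', he]
    have e2 : (2:ℝ) ^ (lam + A + 1) * 2 ^ ((lam + A + 1) / (1 - B) * B)
        = 2 ^ ((lam + A + 1) / (1 - B)) := by
      rw [← Real.rpow_add h2]
      congr 1
      field_simp
      ring
    calc c₁ * 2 ^ (lam + A + 1) * (c₁ ^ (1 / (1 - B) * B) * 2 ^ ((lam + A + 1) / (1 - B) * B))
        = (c₁ * c₁ ^ (1 / (1 - B) * B)) *
          ((2:ℝ) ^ (lam + A + 1) * 2 ^ ((lam + A + 1) / (1 - B) * B)) := by ring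
      _ = c₁ ^ (1 / (1 - B)) * 2 ^ ((lam + A + 1) / (1 - B)) := by rw [e1, e2]
  have hMB1 : (1:ℝ) ≤ M ^ B := one_le_rpow_aux hM1 hB0.le
  have hMbig : c₁ * 2 ^ (lam + A + 1) ≤ M := by
    calc c₁ * 2 ^ (lam + A + 1) = c₁ * 2 ^ (lam + A + 1) * 1 := by ring
      _ ≤ c₁ * 2 ^ (lam + A + 1) * M ^ B := by
          apply mul_le_mul_of_nonneg_left hMB1
          positivity
      _ = M := hkey
  have he21 : c₁ * 2 ^ (lam + A) * 2 = c₁ * 2 ^ (lam + A + 1) := by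
    rw [Real.rpow_add h2 (lam + A) 1, Real.rpow_one]; ring
  intro n
  induction n with
  | zero =>
    simp only [pow_zero, one_mul, Real.rpow_one]
    nlinarith
  | succ n ih =>
    have hx0 : (0:ℝ) < 2 ^ n * k₀ := by positivity
    have hxk : k₀ ≤ 2 ^ n * k₀ := le_mul_of_one_le_left hk₀.le (one_le_pow₀ (by norm_num))
    have hstep := hdouble _ hxk
    have h2n : (2:ℝ) ^ (n + 1) * k₀ = 2 * (2 ^ n * k₀) := by rw [pow_succ]; ring
    rw [h2n]
    set x := ρ (2 ^ n * k₀) with hxdef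
    have hx : 0 ≤ x := hρ_nonneg _ hx0
    have hy1 : (1:ℝ) ≤ (1 + ρ k₀) ^ (B ^ (n + 1)) :=
      one_le_rpow_aux hbase1 (by positivity)
    have h2A : (0:ℝ) < 2 ^ (lam + A) := Real.rpow_pos_of_pos h2 _
    rcases le_or_gt x 1 with hx1 | hx1
    · have hb : x ^ B ≤ 1 := Real.rpow_le_one hx hx1 hB0.le
      have hcc : x ^ C ≤ 1 := Real.rpow_le_one hx hx1 hC.le
      calc ρ (2 * (2 ^ n * k₀)) ≤ c₁ * 2 ^ (lam + A) * (x ^ B + x ^ C) := hstep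
        _ ≤ c₁ * 2 ^ (lam + A) * 2 := by
            apply mul_le_mul_of_nonneg_left (by linarith) (by positivity)
        _ = c₁ * 2 ^ (lam + A + 1) := he21
        _ ≤ M := hMbig
        _ = M * 1 := by ring
        _ ≤ M * (1 + ρ k₀) ^ (B ^ (n + 1)) :=
            mul_le_mul_of_nonneg_left hy1 hM0.le
    · have hcb : x ^ C ≤ x ^ B := Real.rpow_le_rpow_of_exponent_le hx1.le hCB.le
      have hxM : x ^ B ≤ (M * (1 + ρ k₀) ^ (B ^ n)) ^ B :=
        Real.rpow_le_rpow hx ih hB0.le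
      have hynn : (0:ℝ) ≤ (1 + ρ k₀) ^ (B ^ n) := by positivity
      have hsplit : (M * (1 + ρ k₀) ^ (B ^ n)) ^ B
          = M ^ B * (1 + ρ k₀) ^ (B ^ (n + 1)) := by
        rw [Real.mul_rpow hM0.le hynn, ← Real.rpow_mul (by linarith : (0:ℝ) ≤ 1 + ρ k₀),
          ← pow_succ]
      calc ρ (2 * (2 ^ n * k₀)) ≤ c₁ * 2 ^ (lam + A) * (x ^ B + x ^ C) := hstep
        _ ≤ c₁ * 2 ^ (lam + A) * (2 * x ^ B) := by
            apply mul_le_mul_of_nonneg_left (by linarith) (by positivity)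
        _ = c₁ * 2 ^ (lam + A + 1) * x ^ B := by rw [← he21]; ring
        _ ≤ c₁ * 2 ^ (lam + A + 1) * (M ^ B * (1 + ρ k₀) ^ (B ^ (n + 1))) := by
            apply mul_le_mul_of_nonneg_left _ (by positivity)
            rw [← hsplit]; exact hxM
        _ = (c₁ * 2 ^ (lam + A + 1) * M ^ B) * (1 + ρ k₀) ^ (B ^ (n + 1)) := by ring
        _ = M * (1 + ρ k₀) ^ (B ^ (n + 1)) := by rw [hkey]
end

section
/- Let ψ : [k₀,∞) → [0,∞) be non-increasing with k₀ ≥ 0, and let c₂ > 0, 0 < A < D, 0 < C < B < 1 with (D−A)/(1−B) = D/(1−C). If ψ(2k) ≤ c₂·((2k)^A·ψ(k)^B + ψ(k)^C)/k^D for all k ≥ k₀, then there exist constants k̄ and c̄ such that ψ(k) ≤ c̄·k^{−(D−A)/(1−B)} for all k ≥ k̄. -/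
open Real

/-- The doubling hypothesis alone gives power-type decay when C < B < 1. -/
theorem decay_from_doubling_hypothesis
    (k₀ : ℝ) (hk₀ : 0 ≤ k₀)
    (ψ : ℝ → ℝ) (c₂ A B C D : ℝ)
    (hψ_nonneg : ∀ k, k₀ ≤ k → 0 ≤ ψ k)
    (hψ_mono : ∀ k h, k₀ ≤ k → k ≤ h → ψ h ≤ ψ k)
    (hc₂ : 0 < c₂) (hA : 0 < A) (hAD : A < D)
    (hC : 0 < C) (hCB : C < B) (hB1 : B < 1)
    (hexp : (D - A) / (1 - B) = D / (1 - C))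
    (hdouble : ∀ k, k₀ ≤ k →
      ψ (2 * k) ≤ c₂ * ((2 * k) ^ A * ψ k ^ B + ψ k ^ C) / k ^ D) :
    ∃ kbar : ℝ, ∃ cbar : ℝ, ∀ k, kbar ≤ k →
      ψ k ≤ cbar * k ^ (-(D - A) / (1 - B)) := by
  set α := (D - A) / (1 - B) with hα_def
  have hB1' : (0:ℝ) < 1 - B := by linarith
  have hC1' : (0:ℝ) < 1 - C := by linarith
  have hB0 : (0:ℝ) < B := lt_trans hC hCB
  have hα_pos : 0 < α := div_pos (by linarith) hB1'
  have hαB : α - α * B = D - A := by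
    have h : α * (1 - B) = D - A := by
      rw [hα_def]; field_simp
    linarith [h, (by ring : α * (1 - B) = α - α * B)]
  have hαC : α - α * C = D := by
    have h1 : α = D / (1 - C) := hexp
    have h : α * (1 - C) = D := by rw [h1]; field_simp
    linarith [h, (by ring : α * (1 - C) = α - α * C)]
  set s := max k₀ 1 with hs_def
  have hs1 : (1:ℝ) ≤ s := le_max_right _ _
  have hs0 : (0:ℝ) < s := lt_of_lt_of_le one_pos hs1
  have hsk₀ : k₀ ≤ s := le_max_left _ _
  have h2α : (0:ℝ) < (2:ℝ) ^ α := rpow_pos_of_pos two_pos _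
  have h2A : (0:ℝ) < (2:ℝ) ^ A := rpow_pos_of_pos two_pos _
  set y₁ := 2 * c₂ * (2:ℝ) ^ A * (2:ℝ) ^ α with hy₁
  set y₂ := 2 * c₂ * (2:ℝ) ^ α with hy₂
  have hy₁0 : 0 < y₁ := by positivity
  have hy₂0 : 0 < y₂ := by positivity
  set M := max (max (y₁ ^ (1/(1-B))) (y₂ ^ (1/(1-C)))) (max 1 (ψ s * s ^ α)) with hM_def
  have hM1 : (1:ℝ) ≤ M := le_trans (le_max_left 1 _) (le_max_right _ _)
  have hM0 : (0:ℝ) < M := lt_of_lt_of_le one_pos hM1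
  -- key inequalities on M
  have hMB : y₁ ≤ M ^ (1 - B) := by
    have h1 : y₁ ^ (1/(1-B)) ≤ M := le_trans (le_max_left _ _) (le_max_left _ _)
    have h2 : (y₁ ^ (1/(1-B))) ^ (1-B) ≤ M ^ (1-B) :=
      rpow_le_rpow (rpow_nonneg hy₁0.le _) h1 hB1'.le
    rwa [← rpow_mul hy₁0.le, one_div_mul_cancel hB1'.ne', rpow_one] at h2
  have hMC : y₂ ≤ M ^ (1 - C) := by
    have h1 : y₂ ^ (1/(1-C)) ≤ M := le_trans (le_max_right _ _) (le_max_left _ _)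
    have h2 : (y₂ ^ (1/(1-C))) ^ (1-C) ≤ M ^ (1-C) :=
      rpow_le_rpow (rpow_nonneg hy₂0.le _) h1 hC1'.le
    rwa [← rpow_mul hy₂0.le, one_div_mul_cancel hC1'.ne', rpow_one] at h2
  have hMsplitB : M = M ^ B * M ^ (1 - B) := by
    rw [← rpow_add hM0, show B + (1 - B) = (1:ℝ) by ring, rpow_one]
  have hMsplitC : M = M ^ C * M ^ (1 - C) := by
    rw [← rpow_add hM0, show C + (1 - C) = (1:ℝ) by ring, rpow_one]
  have h1 : c₂ * (2:ℝ) ^ A * M ^ B ≤ M * (2:ℝ) ^ (-α) / 2 := by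
    have hMB' : M ^ B * y₁ ≤ M ^ B * M ^ (1 - B) :=
      mul_le_mul_of_nonneg_left hMB (rpow_nonneg hM0.le _)
    rw [← hMsplitB, hy₁] at hMB'
    rw [rpow_neg (by norm_num : (0:ℝ) ≤ 2)]
    have hmul := mul_le_mul_of_nonneg_right hMB' (inv_nonneg.mpr h2α.le)
    have hcan : (2:ℝ) ^ α * ((2:ℝ)^α)⁻¹ = 1 := mul_inv_cancel₀ h2α.ne'
    nlinarith [rpow_nonneg hM0.le B, h2α]
  have h2 : c₂ * M ^ C ≤ M * (2:ℝ) ^ (-α) / 2 := by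
    have hMC' : M ^ C * y₂ ≤ M ^ C * M ^ (1 - C) :=
      mul_le_mul_of_nonneg_left hMC (rpow_nonneg hM0.le _)
    rw [← hMsplitC, hy₂] at hMC'
    rw [rpow_neg (by norm_num : (0:ℝ) ≤ 2)]
    have hmul := mul_le_mul_of_nonneg_right hMC' (inv_nonneg.mpr h2α.le)
    have hcan : (2:ℝ) ^ α * ((2:ℝ)^α)⁻¹ = 1 := mul_inv_cancel₀ h2α.ne'
    nlinarith [rpow_nonneg hM0.le C, h2α]
  have hbase : ψ s ≤ M * s ^ (-α) := by
    have ha : ψ s * s ^ α ≤ M := le_trans (le_max_right 1 _) (le_max_right _ _)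
    have hb : ψ s * s ^ α * s ^ (-α) ≤ M * s ^ (-α) :=
      mul_le_mul_of_nonneg_right ha (rpow_nonneg hs0.le _)
    rwa [mul_assoc, ← rpow_add hs0, add_neg_cancel, rpow_zero, mul_one] at hb
  -- the induction
  have key : ∀ n : ℕ, ψ (s * 2 ^ n) ≤ M * (s * 2 ^ n) ^ (-α) := by
    intro n
    induction n with
    | zero => simpa using hbase
    | succ n ih =>
      set k := s * 2 ^ n with hk_def
      have hpn : (1:ℝ) ≤ 2 ^ n := one_le_pow₀ one_le_two
      have hk0 : (0:ℝ) < k := by positivity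
      have hkk₀ : k₀ ≤ k := le_trans hsk₀ (le_mul_of_one_le_right hs0.le hpn)
      have h2k : s * 2 ^ (n+1) = 2 * k := by rw [hk_def]; ring
      rw [h2k]
      have hψk := hψ_nonneg k hkk₀
      have step := hdouble k hkk₀
      have fB : ψ k ^ B ≤ M ^ B * k ^ (-α * B) := by
        have h := rpow_le_rpow hψk ih hB0.le
        rwa [mul_rpow hM0.le (rpow_nonneg hk0.le _), ← rpow_mul hk0.le] at h
      have fC : ψ k ^ C ≤ M ^ C * k ^ (-α * C) := by
        have h := rpow_le_rpow hψk ih hC.le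
        rwa [mul_rpow hM0.le (rpow_nonneg hk0.le _), ← rpow_mul hk0.le] at h
      have e1 : k ^ A * k ^ (-α * B) / k ^ D = k ^ (-α) := by
        rw [← rpow_add hk0, ← rpow_sub hk0]
        congr 1; linarith
      have e2 : k ^ (-α * C) / k ^ D = k ^ (-α) := by
        rw [← rpow_sub hk0]
        congr 1; linarith
      have e3 : (2:ℝ) ^ (-α) * k ^ (-α) = (2 * k) ^ (-α) :=
        (mul_rpow (by norm_num) hk0.le).symm
      have hkα : (0:ℝ) ≤ k ^ (-α) := rpow_nonneg hk0.le _
      calc ψ (2 * k) ≤ c₂ * ((2 * k) ^ A * ψ k ^ B + ψ k ^ C) / k ^ D := step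
        _ ≤ c₂ * ((2 * k) ^ A * (M ^ B * k ^ (-α * B)) + M ^ C * k ^ (-α * C)) / k ^ D := by
            gcongr
        _ = c₂ * (2:ℝ) ^ A * M ^ B * (k ^ A * k ^ (-α * B) / k ^ D)
              + c₂ * M ^ C * (k ^ (-α * C) / k ^ D) := by
            rw [mul_rpow (by norm_num : (0:ℝ) ≤ 2) hk0.le]; ring
        _ = c₂ * (2:ℝ) ^ A * M ^ B * k ^ (-α) + c₂ * M ^ C * k ^ (-α) := by rw [e1, e2]
        _ ≤ (M * (2:ℝ) ^ (-α) / 2) * k ^ (-α) + (M * (2:ℝ) ^ (-α) / 2) * k ^ (-α) :=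
            add_le_add (mul_le_mul_of_nonneg_right h1 hkα)
              (mul_le_mul_of_nonneg_right h2 hkα)
        _ = M * ((2:ℝ) ^ (-α) * k ^ (-α)) := by ring
        _ = M * (2 * k) ^ (-α) := by rw [e3]
  -- conclusion
  refine ⟨s, M * (2:ℝ) ^ α, fun k hks => ?_⟩
  have hk0 : (0:ℝ) < k := lt_of_lt_of_le hs0 hks
  have hks1 : (1:ℝ) ≤ k / s := (one_le_div hs0).mpr hks
  have hks0 : (0:ℝ) < k / s := by positivity
  set n := ⌊logb 2 (k / s)⌋₊ with hn_def
  have hlog0 : 0 ≤ logb 2 (k / s) := logb_nonneg one_lt_two hks1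
  have hlow : s * 2 ^ n ≤ k := by
    have hn1 : (n:ℝ) ≤ logb 2 (k / s) := Nat.floor_le hlog0
    have h := rpow_le_rpow_of_exponent_le one_le_two hn1
    rw [rpow_logb two_pos (by norm_num) hks0, rpow_natCast] at h
    calc s * 2 ^ n ≤ s * (k / s) := by
          exact mul_le_mul_of_nonneg_left h hs0.le
      _ = k := by field_simp
  have hhigh : k ≤ 2 * (s * 2 ^ n) := by
    have hn2 : logb 2 (k / s) < (n:ℝ) + 1 := Nat.lt_floor_add_one _
    have h := rpow_le_rpow_of_exponent_le one_le_two hn2.le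
    rw [rpow_logb two_pos (by norm_num) hks0] at h
    have : (2:ℝ) ^ ((n:ℝ) + 1) = 2 * 2 ^ n := by
      rw [rpow_add two_pos, rpow_one, rpow_natCast]; ring
    rw [this] at h
    calc k = s * (k / s) := by field_simp
      _ ≤ s * (2 * 2 ^ n) := mul_le_mul_of_nonneg_left h hs0.le
      _ = 2 * (s * 2 ^ n) := by ring
  have hkk₀ : k₀ ≤ s * 2 ^ n := by
    have hpn : (1:ℝ) ≤ 2 ^ n := one_le_pow₀ one_le_two
    exact le_trans hsk₀ (le_mul_of_one_le_right hs0.le hpn)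
  have hsn0 : (0:ℝ) < s * 2 ^ n := by positivity
  have c1 : ψ k ≤ M * (s * 2 ^ n) ^ (-α) :=
    le_trans (hψ_mono (s * 2 ^ n) k hkk₀ hlow) (key n)
  have c2' : (s * 2 ^ n) ^ (-α) ≤ (k / 2) ^ (-α) := by
    apply rpow_le_rpow_of_nonpos (by positivity) (by linarith) (by linarith)
  have c3 : (k / 2) ^ (-α) = (2:ℝ) ^ α * k ^ (-α) := by
    rw [div_rpow hk0.le (by norm_num : (0:ℝ) ≤ 2), rpow_neg (by norm_num : (0:ℝ) ≤ 2),
      division_def, inv_inv, mul_comm]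
  have : ψ k ≤ M * ((2:ℝ) ^ α * k ^ (-α)) := by
    calc ψ k ≤ M * (s * 2 ^ n) ^ (-α) := c1
      _ ≤ M * (k / 2) ^ (-α) := mul_le_mul_of_nonneg_left c2' hM0.le
      _ = M * ((2:ℝ) ^ α * k ^ (-α)) := by rw [c3]
  calc ψ k ≤ M * ((2:ℝ) ^ α * k ^ (-α)) := this
    _ = M * (2:ℝ) ^ α * k ^ (-α) := by ring
    _ = M * (2:ℝ) ^ α * k ^ (-(D - A) / (1 - B)) := by rw [neg_div]
end

section
/- The function ψ(k) = e^{−(ln k)²} on [1,∞) does NOT satisfy the inequality ψ(h) ≤ c₁·(h^A·ψ(k) + ψ(k))/(h−k)^D for all h > k ≥ 1, for any choice of constants c₁ > 0 and 0 < A < D. Equivalently, ψ decays slower than any stretched exponential e^{−((k−1)/τ)^{(D−A)/D}}, contradicting the conclusion of the B = C = 1 case of the generalized lemma. -/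
/-- ψ(k) = exp(−(ln k)²) does not satisfy the full inequality with B = C = 1
for any choice of c₁ > 0 and 0 < A < D. -/
theorem counterexample_full_BC_one :
    ∀ c₁ A D : ℝ, 0 < c₁ → 0 < A → A < D →
      ¬ (∀ h k : ℝ, 1 ≤ k → k < h →
        Real.exp (-(Real.log h) ^ 2) ≤
          c₁ * (h ^ A * Real.exp (-(Real.log k) ^ 2) +
            Real.exp (-(Real.log k) ^ 2)) / (h - k) ^ D) := by
  intro c₁ A D hc hA hAD hcon
  set t : ℝ := (D - A) / 4 with ht_def
  have ht : 0 < t := by rw [ht_def]; linarith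
  have hE : 0 < Real.exp t - 1 := by
    nlinarith [Real.add_one_lt_exp ht.ne']
  set E : ℝ := Real.exp t - 1 with hE_def
  set L : ℝ := Real.log E with hL_def
  set s : ℝ := (D - A) / 2 with hs_def
  have hs : 0 < s := by rw [hs_def]; linarith
  set M : ℝ := max 1 ((Real.log (2 * c₁) + t ^ 2 + A * t - D * L) / s + 1) with hM_def
  have hM1 : (1 : ℝ) ≤ M := le_max_left _ _
  have hM0 : (0 : ℝ) ≤ M := by linarith
  have hkey : Real.log (2 * c₁) + t ^ 2 + A * t - D * L < s * M := by
    have h1 : (Real.log (2 * c₁) + t ^ 2 + A * t - D * L) / s + 1 ≤ M :=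
      le_max_right _ _
    have h2 := mul_le_mul_of_nonneg_left h1 hs.le
    have h3 : s * ((Real.log (2 * c₁) + t ^ 2 + A * t - D * L) / s + 1)
        = (Real.log (2 * c₁) + t ^ 2 + A * t - D * L) + s := by
      field_simp
    linarith [h2, h3.symm.le]
  have hin := hcon (Real.exp (M + t)) (Real.exp M) (Real.one_le_exp hM0)
    (Real.exp_lt_exp.mpr (by linarith))
  rw [Real.log_exp, Real.log_exp] at hin
  have hsub : Real.exp (M + t) - Real.exp M = Real.exp M * E := by
    rw [hE_def, Real.exp_add]; ring
  have hpowA : Real.exp (M + t) ^ A = Real.exp ((M + t) * A) := by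
    rw [Real.rpow_def_of_pos (Real.exp_pos _), Real.log_exp]
  have hpowD : (Real.exp (M + t) - Real.exp M) ^ D
      = Real.exp (M * D) * Real.exp (L * D) := by
    rw [hsub, Real.mul_rpow (Real.exp_pos _).le hE.le,
        Real.rpow_def_of_pos (Real.exp_pos _), Real.log_exp,
        Real.rpow_def_of_pos hE, hL_def]
  rw [hpowA, hpowD, le_div_iff₀ (by positivity)] at hin
  have haux : (1 : ℝ) ≤ Real.exp ((M + t) * A) := by
    apply Real.one_le_exp; positivity
  have h2 : c₁ * (Real.exp ((M + t) * A) * Real.exp (-M ^ 2) + Real.exp (-M ^ 2))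
      ≤ Real.exp (Real.log (2 * c₁) + ((M + t) * A + -M ^ 2)) := by
    rw [Real.exp_add, Real.exp_log (by positivity : (0:ℝ) < 2 * c₁), Real.exp_add]
    nlinarith [mul_le_mul_of_nonneg_right haux (Real.exp_pos (-M ^ 2)).le, hc,
      Real.exp_pos (-M ^ 2)]
  have hlhs : Real.exp (-(M + t) ^ 2) * (Real.exp (M * D) * Real.exp (L * D))
      = Real.exp (-(M + t) ^ 2 + (M * D + L * D)) := by
    rw [Real.exp_add, Real.exp_add]
  have hfinal : -(M + t) ^ 2 + (M * D + L * D)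
      ≤ Real.log (2 * c₁) + ((M + t) * A + -M ^ 2) := by
    have := le_trans (hlhs ▸ hin) h2
    exact Real.exp_le_exp.mp this
  have heq : s * M = M * D - M * A - 2 * M * t := by
    rw [hs_def, ht_def]; ring
  nlinarith [hfinal, hkey, heq]
end

section
/- Let ψ : [0,∞) → [0,∞) be non-increasing and suppose ψ(h) ≤ c·(ψ(k)^B·k^A + ψ(k)^C)/(h−k)^D for all h > k ≥ 0 with A = αpq*/(p−1), B = (p−1−q/r+q/n)·q*/(q(p−1)), C = (q−1−q/r+q/n)·q*/(q(p(1−α)−1)), D = q*, where 1 < p < n, 0 < α < 1/p', q = np(1−α)/(n−αp), q* = nq/(n−q), and r = n/p. Then B = C = 1 and A < D, and consequently there exist τ > 0 such that ψ(k) ≤ ψ(0)·e^{1−(k/τ)^{1−αp'}} for all k ≥ 0. -/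
lemma stretched_decay_aux (A D θ : ℝ) (hD : 0 < D) (hθ0 : 0 < θ) (hθ1 : θ < 1)
    (hAD : A = D * (1 - θ))
    (ψ : ℝ → ℝ) (hψ0 : ∀ k, 0 ≤ k → 0 ≤ ψ k)
    (hmono : ∀ k h, 0 ≤ k → k ≤ h → ψ h ≤ ψ k)
    (c : ℝ) (hc : 0 < c)
    (H : ∀ h k, 0 ≤ k → k < h → ψ h ≤ c * (ψ k * k ^ A + ψ k) / (h - k) ^ D) :
    ∃ τ > (0:ℝ), ∀ k, 0 ≤ k → ψ k ≤ ψ 0 * Real.exp (1 - (k / τ) ^ θ) := by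
  have hA0 : 0 < A := by nlinarith
  set s : ℝ := 1 / θ with hs_def
  have hs1 : 1 ≤ s := by
    rw [hs_def, le_div_iff₀ hθ0]; linarith
  have hs0 : 0 < s := by linarith
  have hθs : θ * s = 1 := by
    rw [hs_def, mul_one_div, div_self hθ0.ne']
  have hsA : (s - 1) * D = s * A := by
    rw [hAD, hs_def]; field_simp
  set E : ℝ := Real.exp 1 with hE_def
  have hE0 : 0 < E := Real.exp_pos 1
  have hDA : 0 < D - A := by nlinarith
  obtain ⟨τ, hτ1, hτkey⟩ : ∃ τ : ℝ, 1 ≤ τ ∧ 2 * c * E ≤ τ ^ (D - A) := by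
    refine ⟨max 1 ((2 * c * E) ^ (1 / (D - A))), le_max_left _ _, ?_⟩
    have h1 : (2 * c * E) ^ (1 / (D - A)) ≤ max 1 ((2 * c * E) ^ (1 / (D - A))) :=
      le_max_right _ _
    have h2 : ((2 * c * E) ^ (1 / (D - A))) ^ (D - A)
        ≤ (max 1 ((2 * c * E) ^ (1 / (D - A)))) ^ (D - A) :=
      Real.rpow_le_rpow (Real.rpow_nonneg (by positivity) _) h1 hDA.le
    rwa [← Real.rpow_mul (by positivity), one_div_mul_cancel hDA.ne', Real.rpow_one] at h2
  have hτ0 : (0:ℝ) < τ := lt_of_lt_of_le one_pos hτ1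
  -- step lemma
  have step : ∀ k d : ℝ, 0 ≤ k → 0 < d → c * E * (k ^ A + 1) ≤ d ^ D →
      ψ (k + d) ≤ ψ k / E := by
    intro k d hk hd hkey
    have h1 := H (k + d) k hk (by linarith)
    rw [add_sub_cancel_left] at h1
    refine h1.trans ?_
    rw [div_le_div_iff₀ (Real.rpow_pos_of_pos hd D) hE0]
    have hψk := hψ0 k hk
    calc c * (ψ k * k ^ A + ψ k) * E = ψ k * (c * E * (k ^ A + 1)) := by ring
      _ ≤ ψ k * d ^ D := mul_le_mul_of_nonneg_left hkey hψk
  -- the iteration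
  have main : ∀ m : ℕ, ψ (τ * (m : ℝ) ^ s) ≤ ψ 0 * Real.exp (-(m : ℝ)) := by
    intro m
    induction m with
    | zero => simp [Real.zero_rpow hs0.ne']
    | succ m ih =>
      have hm0 : (0:ℝ) ≤ (m : ℝ) := Nat.cast_nonneg m
      set K : ℝ := τ * (m : ℝ) ^ s with hK_def
      have hK0 : 0 ≤ K := by positivity
      set d : ℝ := τ * ((m : ℝ) + 1) ^ s - K with hd_def
      have hd0 : 0 < d := by
        have : ((m:ℝ)) ^ s < ((m:ℝ) + 1) ^ s :=
          Real.rpow_lt_rpow hm0 (by linarith) hs0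
        rw [hd_def, hK_def]; nlinarith
      have hkey : c * E * (K ^ A + 1) ≤ d ^ D := by
        rcases Nat.eq_zero_or_pos m with hm | hm
        · subst hm
          have hK : K = 0 := by
            simp [hK_def, Real.zero_rpow hs0.ne']
          have hdτ : d = τ := by
            simp [hd_def, hK]
          rw [hK, hdτ, Real.zero_rpow hA0.ne']
          have h1 : c * E ≤ τ ^ (D - A) := by nlinarith
          have h2 : τ ^ (D - A) ≤ τ ^ D :=
            Real.rpow_le_rpow_of_exponent_le hτ1 (by linarith)
          calc c * E * (0 + 1) = c * E := by ring
            _ ≤ τ ^ (D - A) := h1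
            _ ≤ τ ^ D := h2
        · have hm1 : (1:ℝ) ≤ (m : ℝ) := by exact_mod_cast hm
          have hmpos : (0:ℝ) < (m:ℝ) := by linarith
          have hinv : (0:ℝ) < 1 / (m:ℝ) := by positivity
          have bern : (1 : ℝ) + s * (1 / (m:ℝ)) ≤ (1 + 1 / (m:ℝ)) ^ s :=
            one_add_mul_self_le_rpow_one_add (by linarith) hs1
          have hgap : τ * (s * (m:ℝ) ^ (s - 1)) ≤ d := by
            have h1 : ((m:ℝ) + 1) ^ s = (m:ℝ) ^ s * (1 + 1/(m:ℝ)) ^ s := by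
              rw [← Real.mul_rpow hm0 (by linarith)]
              congr 1
              field_simp
            have h2 : (m:ℝ) ^ s * (1 + s * (1/(m:ℝ))) ≤ ((m:ℝ)+1) ^ s := by
              rw [h1]
              exact mul_le_mul_of_nonneg_left bern (Real.rpow_nonneg hm0 s)
            have h3 : (m:ℝ) ^ (s - 1) = (m:ℝ) ^ s / (m:ℝ) := by
              rw [Real.rpow_sub hmpos, Real.rpow_one]
            have h4 : (m:ℝ) ^ s * (1 + s * (1/(m:ℝ))) =
                (m:ℝ) ^ s + s * ((m:ℝ) ^ s / (m:ℝ)) := by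
              field_simp
            rw [hd_def, hK_def, h3]
            nlinarith [h2]
          have hmsA : 0 < (m:ℝ) ^ (s - 1) := Real.rpow_pos_of_pos hmpos (s - 1)
          have hgap0 : 0 < τ * (s * (m:ℝ) ^ (s - 1)) :=
            mul_pos hτ0 (mul_pos hs0 hmsA)
          have hdD : (τ * (s * (m:ℝ) ^ (s-1))) ^ D ≤ d ^ D :=
            Real.rpow_le_rpow hgap0.le hgap hD.le
          refine le_trans ?_ hdD
          have expand : (τ * (s * (m:ℝ) ^ (s-1))) ^ D
              = τ ^ D * s ^ D * (m:ℝ) ^ (s * A) := by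
            rw [Real.mul_rpow hτ0.le (mul_pos hs0 hmsA).le,
                Real.mul_rpow hs0.le hmsA.le, ← Real.rpow_mul hm0, hsA]
            ring
          rw [expand]
          have hKA : K ^ A = τ ^ A * (m:ℝ) ^ (s * A) := by
            rw [hK_def, Real.mul_rpow hτ0.le (Real.rpow_nonneg hm0 s),
                ← Real.rpow_mul hm0]
          rw [hKA]
          have hm_sA : 1 ≤ (m:ℝ) ^ (s * A) :=
            Real.one_le_rpow hm1 (by positivity)
          have hτA1 : 1 ≤ τ ^ A := Real.one_le_rpow hτ1 hA0.le
          have hτDA : τ ^ (D - A) * τ ^ A = τ ^ D := by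
            rw [← Real.rpow_add hτ0]; ring_nf
          have hsD1 : 1 ≤ s ^ D := Real.one_le_rpow hs1 hD.le
          have hmsA0 : (0:ℝ) ≤ (m:ℝ) ^ (s * A) := by linarith
          have hcE : 0 < c * E := mul_pos hc hE0
          have h5 : c * E * (τ ^ A * (m:ℝ) ^ (s*A) + 1)
              ≤ 2 * c * E * τ ^ A * (m:ℝ) ^ (s*A) := by
            have hone : 1 ≤ τ ^ A * (m:ℝ) ^ (s*A) :=
              one_le_mul_of_one_le_of_one_le hτA1 hm_sA
            have hcle : c * E ≤ c * E * (τ ^ A * (m:ℝ) ^ (s*A)) :=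
              le_mul_of_one_le_right hcE.le hone
            linarith
          have h6 : 2 * c * E * τ ^ A ≤ τ ^ D := by
            calc 2 * c * E * τ ^ A ≤ τ ^ (D - A) * τ ^ A :=
                mul_le_mul_of_nonneg_right hτkey (by linarith)
              _ = τ ^ D := hτDA
          have hτD0 : 0 < τ ^ D := Real.rpow_pos_of_pos hτ0 D
          have h7 : τ ^ D ≤ τ ^ D * s ^ D :=
            le_mul_of_one_le_right hτD0.le hsD1
          calc c * E * (τ ^ A * (m:ℝ) ^ (s*A) + 1)
              ≤ 2 * c * E * τ ^ A * (m:ℝ) ^ (s*A) := h5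
            _ ≤ τ ^ D * (m:ℝ) ^ (s*A) := mul_le_mul_of_nonneg_right h6 hmsA0
            _ ≤ τ ^ D * s ^ D * (m:ℝ) ^ (s*A) := mul_le_mul_of_nonneg_right h7 hmsA0
      have happ := step K d hK0 hd0 hkey
      have heq : K + d = τ * ((m:ℝ) + 1) ^ s := by rw [hd_def]; ring
      rw [heq] at happ
      have h8 : ψ (τ * ((m:ℝ)+1) ^ s) ≤ ψ 0 * Real.exp (-(m:ℝ)) / E := by
        refine happ.trans ?_
        gcongr
      have h9 : ψ 0 * Real.exp (-(m:ℝ)) / E = ψ 0 * Real.exp (-((m:ℝ)+1)) := by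
        rw [hE_def, mul_div_assoc, ← Real.exp_sub]
        ring_nf
      push_cast
      rw [← h9]
      exact h8
  -- conclusion
  refine ⟨τ, hτ0, fun k hk => ?_⟩
  set m : ℕ := ⌊(k / τ) ^ θ⌋₊ with hm_def
  have hkτ : 0 ≤ (k / τ) ^ θ := Real.rpow_nonneg (by positivity) θ
  have h1 : (m : ℝ) ≤ (k / τ) ^ θ := Nat.floor_le hkτ
  have h2 : (k / τ) ^ θ < (m : ℝ) + 1 := Nat.lt_floor_add_one _
  have hKk : τ * (m : ℝ) ^ s ≤ k := by
    have h3 : (m:ℝ) ^ s ≤ ((k/τ) ^ θ) ^ s :=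
      Real.rpow_le_rpow (Nat.cast_nonneg m) h1 hs0.le
    have h4 : ((k/τ) ^ θ) ^ s = k / τ := by
      rw [← Real.rpow_mul (by positivity), hθs, Real.rpow_one]
    rw [h4] at h3
    calc τ * (m:ℝ) ^ s ≤ τ * (k / τ) := by nlinarith
      _ = k := by field_simp
  have hK0 : (0:ℝ) ≤ τ * (m:ℝ) ^ s := by positivity
  calc ψ k ≤ ψ (τ * (m:ℝ) ^ s) := hmono (τ * (m:ℝ) ^ s) k hK0 hKk
    _ ≤ ψ 0 * Real.exp (-(m:ℝ)) := main m
    _ ≤ ψ 0 * Real.exp (1 - (k / τ) ^ θ) := by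
        have := hψ0 0 le_rfl
        have hexp : Real.exp (-(m:ℝ)) ≤ Real.exp (1 - (k/τ) ^ θ) :=
          Real.exp_le_exp.mpr (by linarith)
        exact mul_le_mul_of_nonneg_left hexp this


/-- Application, case r = n/p: the exponents satisfy B = C = 1 and A < D, and
the level-set function decays like a stretched exponential. -/
theorem application_exponents_r_eq_n_div_p
    (n p α q qs A B C D : ℝ)
    (hp : 1 < p) (hpn : p < n)
    (hα0 : 0 < α) (hα : α < 1 / (p / (p - 1)))
    (hq : q = n * p * (1 - α) / (n - α * p))
    (hqs : qs = n * q / (n - q))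
    (hA : A = α * p * qs / (p - 1))
    (hB : B = (p - 1 - q / (n / p) + q / n) * qs / (q * (p - 1)))
    (hC : C = (q - 1 - q / (n / p) + q / n) * qs / (q * (p * (1 - α) - 1)))
    (hD : D = qs)
    (ψ : ℝ → ℝ)
    (hψ_nonneg : ∀ k, 0 ≤ k → 0 ≤ ψ k)
    (hψ_mono : ∀ k h, 0 ≤ k → k ≤ h → ψ h ≤ ψ k)
    (c : ℝ) (hc : 0 < c)
    (hineq : ∀ h k, 0 ≤ k → k < h →
      ψ h ≤ c * (ψ k ^ B * k ^ A + ψ k ^ C) / (h - k) ^ D) :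
    B = 1 ∧ C = 1 ∧ A < D ∧
      ∃ τ > (0 : ℝ), ∀ k, 0 ≤ k →
        ψ k ≤ ψ 0 * Real.exp (1 - (k / τ) ^ (1 - α * (p / (p - 1)))) := by
  have hp0 : (0:ℝ) < p := by linarith
  have hn : (0:ℝ) < n := by linarith
  have hp1 : (0:ℝ) < p - 1 := by linarith
  have hαp : α * p < p - 1 := by
    rw [one_div_div] at hα
    have := (lt_div_iff₀ hp0).mp hα
    linarith
  have hα1 : α < 1 := by nlinarith
  have e1 : n - α * p ≠ 0 := by nlinarith
  have e2 : n ≠ 0 := ne_of_gt hn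
  have e3 : p ≠ 0 := ne_of_gt hp0
  have e4 : p - 1 ≠ 0 := ne_of_gt hp1
  have e5 : p * (1 - α) - 1 ≠ 0 := by nlinarith
  have hq0 : 0 < q := by
    rw [hq]
    apply div_pos
    · nlinarith
    · nlinarith
  have hqn : q < n := by
    rw [hq, div_lt_iff₀ (by nlinarith : (0:ℝ) < n - α * p)]
    nlinarith
  have e6 : q ≠ 0 := ne_of_gt hq0
  have e7 : n - q ≠ 0 := by intro h; nlinarith
  have hqs0 : 0 < qs := by
    rw [hqs]
    apply div_pos
    · nlinarith
    · nlinarith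
  -- B = 1
  have hB1 : B = 1 := by
    rw [hB, hqs]
    field_simp
    ring
  -- C = 1
  have hC1 : C = 1 := by
    have key : n * (q - 1) - q * (p - 1) = (p * (1 - α) - 1) * (n - q) := by
      rw [hq]; field_simp [show n - p * α ≠ 0 by rwa [mul_comm α p] at e1]; ring
    rw [hC, hqs]
    field_simp
    linear_combination key
  -- A < D
  have hAD : A < D := by
    rw [hA, hD, div_lt_iff₀ hp1]
    nlinarith
  refine ⟨hB1, hC1, hAD, ?_⟩
  -- decay
  set θ : ℝ := 1 - α * (p / (p - 1)) with hθ_def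
  have hθ0 : 0 < θ := by
    rw [hθ_def]
    have h2 : α * (p / (p - 1)) < 1 := by
      rw [← mul_div_assoc]
      exact (div_lt_one hp1).mpr hαp
    linarith
  have hθ1 : θ < 1 := by
    rw [hθ_def]
    have : 0 < α * (p / (p - 1)) := by positivity
    linarith
  have hADθ : A = D * (1 - θ) := by
    rw [hA, hD, hθ_def]
    field_simp
    ring
  simp only [hB1, hC1, Real.rpow_one] at hineq
  exact stretched_decay_aux A D θ (by linarith [hqs0, hD] : 0 < D) hθ0 hθ1 hADθ
    ψ hψ_nonneg hψ_mono c hc hineq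
end
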